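/- arXiv:2601.05909 — 2 statements merged into one kernel-verified Lean document; each statement's English description precedes it below -/
import Mathlib

section
/- Let X be a measurable space, ν₀ and ν₁ probability measures on X, and F a finite nonempty set of measurable classifiers f : X → {0,1}. Let x₁, …, x_{m₀} be i.i.d. samples from ν₀ and x′₁, …, x′_{m₁} i.i.d. samples from ν₁, jointly independent. Then for every ε > 0, the probability that there exists f ∈ F with | μ̂(f) − μ(f) | ≥ ε is at most 2·|F|·exp(−2·m₀·m₁·ε² / (m₀ + m₁)). In particular, for every δ ∈ (0,1), if min(m₀, m₁) ≥ (1/ε²)·log(2·|F| / δ) then this probability is at most δ. -/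
open MeasureTheory ProbabilityTheory Real



lemma bern_mgf_bound {p : ℝ} (hp0 : 0 ≤ p) (hp1 : p ≤ 1) (t : ℝ) :
    Real.exp (-(t * p)) * (1 - p + p * Real.exp t) ≤ Real.exp (t ^ 2 / 8) := by
  set q : ℝ → ℝ := fun s => 1 - p + p * Real.exp s with hqdef
  have hq : ∀ s, 0 < q s := by
    intro s
    rcases lt_or_eq_of_le hp1 with h | h
    · have : 0 ≤ p * Real.exp s := mul_nonneg hp0 (exp_pos s).le
      simp only [hqdef]; linarith
    · subst h
      simpa [hqdef] using exp_pos s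
  have hqd : ∀ s, HasDerivAt q (p * Real.exp s) s := by
    intro s
    exact ((Real.hasDerivAt_exp s).const_mul p).const_add (1 - p)
  set g : ℝ → ℝ := fun s => p * s + s ^ 2 / 8 - Real.log (q s) with hgdef
  set g' : ℝ → ℝ := fun s => p + s / 4 - p * Real.exp s / q s with hg'def
  have hgd : ∀ s, HasDerivAt g (g' s) s := by
    intro s
    have h2 : HasDerivAt (fun s : ℝ => p * s) p s := by
      simpa using (hasDerivAt_id s).const_mul p
    have h3 : HasDerivAt (fun s => Real.log (q s)) (p * Real.exp s / q s) s :=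
      (hqd s).log (hq s).ne'
    have := (h2.add ((hasDerivAt_pow 2 s).div_const 8)).sub h3
    refine this.congr_deriv ?_
    simp only [hg'def, pow_one, Nat.cast_ofNat]
    ring
  have hg'd : ∀ s, HasDerivAt g' (1 / 4 - p * Real.exp s * (1 - p) / (q s) ^ 2) s := by
    intro s
    have h1 : HasDerivAt (fun s : ℝ => p + s / 4) (1 / 4) s := by
      simpa using ((hasDerivAt_id s).div_const 4).const_add p
    have h2 : HasDerivAt (fun s => p * Real.exp s / q s)
        ((p * Real.exp s * q s - p * Real.exp s * (p * Real.exp s)) / (q s) ^ 2) s :=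
      ((Real.hasDerivAt_exp s).const_mul p).div (hqd s) (hq s).ne'
    have hnum : p * Real.exp s * (1 - p)
        = p * Real.exp s * q s - p * Real.exp s * (p * Real.exp s) := by
      simp only [hqdef]; ring
    have := h1.sub h2
    refine this.congr_deriv ?_
    rw [hnum]
  have hsec : ∀ s, 0 ≤ 1 / 4 - p * Real.exp s * (1 - p) / (q s) ^ 2 := by
    intro s
    have hq2 : 0 < (q s) ^ 2 := pow_pos (hq s) 2
    rw [sub_nonneg, div_le_iff₀ hq2]
    have h : q s = p * Real.exp s + (1 - p) := by simp [hqdef]; ring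
    nlinarith [sq_nonneg (p * Real.exp s - (1 - p))]
  have hg'mono : Monotone g' :=
    monotone_of_hasDerivAt_nonneg hg'd (fun s => hsec s)
  have hg'0 : g' 0 = 0 := by simp [hg'def, hqdef]
  have hg0 : g 0 = 0 := by simp [hgdef, hqdef]
  have hgt : ∀ s, 0 ≤ g s := by
    intro s
    rcases le_total 0 s with h | h
    · have hmono : MonotoneOn g (Set.Ici 0) := by
        apply monotoneOn_of_hasDerivWithinAt_nonneg (convex_Ici 0)
          (fun u _ => (hgd u).continuousAt.continuousWithinAt)
          (fun u _ => (hgd u).hasDerivWithinAt)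
        intro u hu
        rw [interior_Ici] at hu
        rw [← hg'0]
        exact hg'mono (le_of_lt hu)
      have := hmono Set.self_mem_Ici h h
      rwa [hg0] at this
    · have hmono : AntitoneOn g (Set.Iic 0) := by
        apply antitoneOn_of_hasDerivWithinAt_nonpos (convex_Iic 0)
          (fun u _ => (hgd u).continuousAt.continuousWithinAt)
          (fun u _ => (hgd u).hasDerivWithinAt)
        intro u hu
        rw [interior_Iic] at hu
        rw [← hg'0]
        exact hg'mono (le_of_lt hu)
      have := hmono h Set.self_mem_Iic h
      rwa [hg0] at this
    
  have hlog : Real.log (q t) ≤ p * t + t ^ 2 / 8 := by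
    have := hgt t; simp only [hgdef] at this; linarith
  have hqle : q t ≤ Real.exp (p * t + t ^ 2 / 8) := by
    calc q t = Real.exp (Real.log (q t)) := (Real.exp_log (hq t)).symm
    _ ≤ _ := Real.exp_le_exp.mpr hlog
  calc Real.exp (-(t * p)) * (1 - p + p * Real.exp t)
      ≤ Real.exp (-(t * p)) * Real.exp (p * t + t ^ 2 / 8) :=
        mul_le_mul_of_nonneg_left hqle (exp_pos _).le
    _ = Real.exp (t ^ 2 / 8) := by rw [← Real.exp_add]; ring_nf

lemma mgf_indicator_le {X : Type*} [MeasurableSpace X] (ν : Measure X) [IsProbabilityMeasure ν]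
    {f : X → Bool} (hf : Measurable f) (c t : ℝ) :
    mgf (fun z => c * ((if f z = true then (1:ℝ) else 0) - (ν {z | f z = true}).toReal)) ν t
      ≤ Real.exp (t ^ 2 * c ^ 2 / 8) := by
  set A : Set X := {z | f z = true} with hAdef
  have hA : MeasurableSet A := hf (measurableSet_singleton true)
  set p : ℝ := (ν A).toReal with hpdef
  have hp0 : 0 ≤ p := ENNReal.toReal_nonneg
  have hp1 : p ≤ 1 := by
    have := prob_le_one (μ := ν) (s := A)
    simpa [hpdef] using ENNReal.toReal_mono ENNReal.one_ne_top this
  have key : ∀ z, Real.exp (t * (c * ((if f z = true then (1:ℝ) else 0) - p)))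
      = Real.exp (-(t * c * p))
        + (Real.exp (t * c * (1 - p)) - Real.exp (-(t * c * p)))
            * Set.indicator A (fun _ => (1:ℝ)) z := by
    intro z
    by_cases h : f z = true
    · have hz : z ∈ A := h
      rw [Set.indicator_of_mem hz]
      rw [show t * (c * ((if f z = true then (1:ℝ) else 0) - p)) = t * c * (1 - p) by
        rw [if_pos h]; ring]
      ring
    · have hz : z ∉ A := h
      rw [Set.indicator_of_notMem hz]
      rw [show t * (c * ((if f z = true then (1:ℝ) else 0) - p)) = -(t * c * p) by
        rw [if_neg h]; ring]
      ring
  have hint : Integrable (Set.indicator A (fun _ => (1:ℝ))) ν :=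
    (integrable_const (1:ℝ)).indicator hA
  have hmgf : mgf (fun z => c * ((if f z = true then (1:ℝ) else 0) - p)) ν t
      = Real.exp (-(t * c * p))
        + (Real.exp (t * c * (1 - p)) - Real.exp (-(t * c * p))) * p := by
    rw [mgf]
    rw [show (fun z => Real.exp (t * (c * ((if f z = true then (1:ℝ) else 0) - p))))
        = fun z => Real.exp (-(t * c * p))
          + (Real.exp (t * c * (1 - p)) - Real.exp (-(t * c * p)))
              * Set.indicator A (fun _ => (1:ℝ)) z from funext key]
    rw [integral_add (integrable_const _) (hint.const_mul _)]
    rw [integral_const, integral_const_mul, integral_indicator_const (1:ℝ) hA]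
    simp [hpdef, Measure.real]
  rw [hmgf]
  have h2 : Real.exp (t * c * (1 - p)) = Real.exp (-(t * c * p)) * Real.exp (t * c) := by
    rw [← Real.exp_add]; ring_nf
  calc Real.exp (-(t * c * p)) + (Real.exp (t * c * (1 - p)) - Real.exp (-(t * c * p))) * p
      = Real.exp (-(t * c * p)) * (1 - p + p * Real.exp (t * c)) := by rw [h2]; ring
    _ ≤ Real.exp ((t * c) ^ 2 / 8) := bern_mgf_bound hp0 hp1 (t * c)
    _ = Real.exp (t ^ 2 * c ^ 2 / 8) := by rw [mul_pow]

lemma two_sample_hoeffding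
    {X : Type*} [MeasurableSpace X]
    (ν₀ ν₁ : Measure X) [IsProbabilityMeasure ν₀] [IsProbabilityMeasure ν₁]
    {Ω : Type*} [MeasurableSpace Ω] (P : Measure Ω) [IsProbabilityMeasure P]
    (m₀ m₁ : ℕ) (hm₀ : 1 ≤ m₀) (hm₁ : 1 ≤ m₁)
    (x : Fin m₀ → Ω → X) (x' : Fin m₁ → Ω → X)
    (hxmeas : ∀ i, Measurable (x i)) (hx'meas : ∀ j, Measurable (x' j))
    (hxlaw : ∀ i, Measure.map (x i) P = ν₀)
    (hx'law : ∀ j, Measure.map (x' j) P = ν₁)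
    (hindep : iIndepFun (Sum.elim x x') P)
    {f : X → Bool} (hf : Measurable f) (ε : ℝ) (hε : 0 < ε) :
    P {ω | ε ≤ |(1 / (m₀ : ℝ)) * ∑ i, (if f (x i ω) = true then (1 : ℝ) else 0)
            - (1 / (m₁ : ℝ)) * ∑ j, (if f (x' j ω) = true then (1 : ℝ) else 0)
            - ((ν₀ {z | f z = true}).toReal - (ν₁ {z | f z = true}).toReal)|}
      ≤ ENNReal.ofReal (2 * Real.exp (-(2 * m₀ * m₁ * ε ^ 2) / ((m₀ : ℝ) + m₁))) := by
  have hm₀' : (0:ℝ) < m₀ := by exact_mod_cast hm₀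
  have hm₁' : (0:ℝ) < m₁ := by exact_mod_cast hm₁
  set p₀ : ℝ := (ν₀ {z | f z = true}).toReal with hp₀def
  set p₁ : ℝ := (ν₁ {z | f z = true}).toReal with hp₁def
  have hp₀0 : 0 ≤ p₀ := ENNReal.toReal_nonneg
  have hp₁0 : 0 ≤ p₁ := ENNReal.toReal_nonneg
  have hp₀1 : p₀ ≤ 1 :=
    ENNReal.toReal_mono ENNReal.one_ne_top (prob_le_one (μ := ν₀) (s := {z | f z = true}))
  have hp₁1 : p₁ ≤ 1 :=
    ENNReal.toReal_mono ENNReal.one_ne_top (prob_le_one (μ := ν₁) (s := {z | f z = true}))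
  -- indicator as a measurable function
  have hindmeas : Measurable (fun z : X => if f z = true then (1:ℝ) else 0) := by
    exact Measurable.ite (hf (measurableSet_singleton true)) measurable_const measurable_const
  have hindabs : ∀ (b : Bool) (p : ℝ), 0 ≤ p → p ≤ 1 →
      |(if b = true then (1:ℝ) else 0) - p| ≤ 1 := by
    intro b p h0 h1
    rw [abs_le]
    cases b <;> simp <;> constructor <;> linarith
  -- the centered variables
  set g : Fin m₀ ⊕ Fin m₁ → X → ℝ :=
    Sum.elim (fun _ z => (1 / (m₀:ℝ)) * ((if f z = true then (1:ℝ) else 0) - p₀))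
             (fun _ z => (-(1 / (m₁:ℝ))) * ((if f z = true then (1:ℝ) else 0) - p₁)) with hgdef
  have hgmeas : ∀ k, Measurable (g k) := by
    rintro (i | j)
    · exact (hindmeas.sub measurable_const).const_mul _
    · exact (hindmeas.sub measurable_const).const_mul _
  set κ : Fin m₀ ⊕ Fin m₁ → Ω → ℝ := fun k => g k ∘ Sum.elim x x' k with hκdef
  have hκmeas : ∀ k, Measurable (κ k) := by
    rintro (i | j)
    · exact (hgmeas _).comp (hxmeas i)
    · exact (hgmeas _).comp (hx'meas j)
  have hκindep : iIndepFun κ P := hindep.comp g hgmeas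
  have hκbound : ∀ k ω, |κ k ω| ≤ 1 := by
    rintro (i | j) ω
    · show |(1 / (m₀:ℝ)) * ((if f (x i ω) = true then (1:ℝ) else 0) - p₀)| ≤ 1
      rw [abs_mul]
      have h1 : |(1 / (m₀:ℝ))| ≤ 1 := by
        rw [abs_of_nonneg (by positivity)]
        rw [div_le_one hm₀']; exact_mod_cast hm₀
      have h2 := hindabs (f (x i ω)) p₀ hp₀0 hp₀1
      nlinarith [abs_nonneg ((if f (x i ω) = true then (1:ℝ) else 0) - p₀)]
    · show |(-(1 / (m₁:ℝ))) * ((if f (x' j ω) = true then (1:ℝ) else 0) - p₁)| ≤ 1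
      rw [abs_mul]
      have h1 : |(-(1 / (m₁:ℝ)))| ≤ 1 := by
        rw [abs_neg, abs_of_nonneg (by positivity)]
        rw [div_le_one hm₁']; exact_mod_cast hm₁
      have h2 := hindabs (f (x' j ω)) p₁ hp₁0 hp₁1
      nlinarith [abs_nonneg ((if f (x' j ω) = true then (1:ℝ) else 0) - p₁)]
  have hκint : ∀ (t : ℝ) k, Integrable (fun ω => Real.exp (t * κ k ω)) P := by
    intro t k
    refine ⟨(((hκmeas k).const_mul t).exp).aestronglyMeasurable, ?_⟩
    apply HasFiniteIntegral.of_bounded (C := Real.exp |t|)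
    filter_upwards with ω
    rw [Real.norm_eq_abs, Real.abs_exp]
    apply Real.exp_le_exp.mpr
    calc t * κ k ω ≤ |t * κ k ω| := le_abs_self _
      _ = |t| * |κ k ω| := abs_mul _ _
      _ ≤ |t| * 1 := by gcongr; exact hκbound k ω
      _ = |t| := mul_one _
  -- per coordinate mgf bound
  set c : Fin m₀ ⊕ Fin m₁ → ℝ := Sum.elim (fun _ => 1 / (m₀:ℝ)) (fun _ => -(1 / (m₁:ℝ)))
    with hcdef
  have hmgf_k : ∀ (t : ℝ) k, mgf (κ k) P t ≤ Real.exp (t ^ 2 * (c k) ^ 2 / 8) := by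
    intro t k
    cases k with
    | inl i =>
      have hmap : mgf (κ (Sum.inl i)) P t = mgf (g (Sum.inl i)) ν₀ t := by
        simp only [mgf]
        rw [← hxlaw i,
          integral_map (hxmeas i).aemeasurable
            (((hgmeas (Sum.inl i)).const_mul t).exp.aestronglyMeasurable)]
        rfl
      rw [hmap]
      exact mgf_indicator_le ν₀ hf (1 / (m₀:ℝ)) t
    | inr j =>
      have hmap : mgf (κ (Sum.inr j)) P t = mgf (g (Sum.inr j)) ν₁ t := by
        simp only [mgf]
        rw [← hx'law j,
          integral_map (hx'meas j).aemeasurable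
            (((hgmeas (Sum.inr j)).const_mul t).exp.aestronglyMeasurable)]
        rfl
      rw [hmap]
      exact mgf_indicator_le ν₁ hf (-(1 / (m₁:ℝ))) t
  -- mgf of the sum
  set v : ℝ := 1 / (m₀:ℝ) + 1 / (m₁:ℝ) with hvdef
  have hv : 0 < v := by positivity
  have hmgf_sum : ∀ (t : ℝ), mgf (∑ k, κ k) P t ≤ Real.exp (t ^ 2 * v / 8) := by
    intro t
    rw [hκindep.mgf_sum hκmeas Finset.univ]
    calc ∏ k, mgf (κ k) P t
        ≤ ∏ k, Real.exp (t ^ 2 * (c k) ^ 2 / 8) :=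
          Finset.prod_le_prod (fun k _ => mgf_nonneg) (fun k _ => hmgf_k t k)
      _ = Real.exp (∑ k, t ^ 2 * (c k) ^ 2 / 8) := (Real.exp_sum _ _).symm
      _ = Real.exp (t ^ 2 * v / 8) := by
          congr 1
          rw [Fintype.sum_sum_type]
          simp only [hcdef, Sum.elim_inl, Sum.elim_inr, Finset.sum_const, Finset.card_univ,
            Fintype.card_fin, nsmul_eq_mul, hvdef]
          field_simp
  -- Chernoff
  set t₀ : ℝ := 4 * ε / v with ht₀def
  have ht₀ : 0 ≤ t₀ := by positivity
  have hexp_eq : Real.exp (-t₀ * ε) * Real.exp (t₀ ^ 2 * v / 8)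
      = Real.exp (-(2 * m₀ * m₁ * ε ^ 2) / ((m₀ : ℝ) + m₁)) := by
    rw [← Real.exp_add]
    congr 1
    rw [ht₀def, hvdef]
    have h1 : (m₀:ℝ) ≠ 0 := hm₀'.ne'
    have h2 : (m₁:ℝ) ≠ 0 := hm₁'.ne'
    have h3 : (1 / (m₀:ℝ) + 1 / (m₁:ℝ)) ≠ 0 := by positivity
    have h4 : (m₀:ℝ) + m₁ ≠ 0 := by positivity
    field_simp
    ring
  have hW : ∀ ω, (∑ k, κ k) ω
      = (1 / (m₀ : ℝ)) * ∑ i, (if f (x i ω) = true then (1 : ℝ) else 0)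
        - (1 / (m₁ : ℝ)) * ∑ j, (if f (x' j ω) = true then (1 : ℝ) else 0)
        - (p₀ - p₁) := by
    intro ω
    rw [Finset.sum_apply]
    rw [Fintype.sum_sum_type]
    have h0 : ∑ i : Fin m₀, κ (Sum.inl i) ω
        = (1 / (m₀ : ℝ)) * ∑ i, (if f (x i ω) = true then (1 : ℝ) else 0) - p₀ := by
      show ∑ i : Fin m₀, (1 / (m₀:ℝ)) * ((if f (x i ω) = true then (1:ℝ) else 0) - p₀) = _
      rw [← Finset.mul_sum, Finset.sum_sub_distrib, Finset.sum_const, Finset.card_univ,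
        Fintype.card_fin, nsmul_eq_mul]
      have key : ∀ S : ℝ, (1 / (m₀:ℝ)) * (S - (m₀:ℝ) * p₀) = (1 / (m₀:ℝ)) * S - p₀ := by
        intro S
        have hne : (m₀:ℝ) ≠ 0 := hm₀'.ne'
        field_simp
      exact key _
    have h1 : ∑ j : Fin m₁, κ (Sum.inr j) ω
        = -((1 / (m₁ : ℝ)) * ∑ j, (if f (x' j ω) = true then (1 : ℝ) else 0) - p₁) := by
      show ∑ j : Fin m₁, (-(1 / (m₁:ℝ))) * ((if f (x' j ω) = true then (1:ℝ) else 0) - p₁) = _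
      rw [← Finset.mul_sum, Finset.sum_sub_distrib, Finset.sum_const, Finset.card_univ,
        Fintype.card_fin, nsmul_eq_mul]
      have key : ∀ S : ℝ, (-(1 / (m₁:ℝ))) * (S - (m₁:ℝ) * p₁) = -((1 / (m₁:ℝ)) * S - p₁) := by
        intro S
        have hne : (m₁:ℝ) ≠ 0 := hm₁'.ne'
        field_simp
      exact key _
    rw [h0, h1]
    ring
  set B : ℝ := Real.exp (-(2 * m₀ * m₁ * ε ^ 2) / ((m₀ : ℝ) + m₁)) with hBdef
  have hB : 0 ≤ B := (Real.exp_pos _).le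
  have hupper : (P {ω | ε ≤ (∑ k, κ k) ω}).toReal ≤ B := by
    calc (P {ω | ε ≤ (∑ k, κ k) ω}).toReal
        ≤ Real.exp (-t₀ * ε) * mgf (∑ k, κ k) P t₀ :=
          measure_ge_le_exp_mul_mgf ε ht₀ (hκindep.integrable_exp_mul_sum hκmeas
            (fun k _ => hκint t₀ k))
      _ ≤ Real.exp (-t₀ * ε) * Real.exp (t₀ ^ 2 * v / 8) := by
          gcongr
          exact hmgf_sum t₀
      _ = B := hexp_eq
  have hlower : (P {ω | (∑ k, κ k) ω ≤ -ε}).toReal ≤ B := by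
    calc (P {ω | (∑ k, κ k) ω ≤ -ε}).toReal
        ≤ Real.exp (-(-t₀) * (-ε)) * mgf (∑ k, κ k) P (-t₀) :=
          measure_le_le_exp_mul_mgf (-ε) (neg_nonpos.mpr ht₀)
            (hκindep.integrable_exp_mul_sum hκmeas (fun k _ => hκint (-t₀) k))
      _ ≤ Real.exp (-(-t₀) * (-ε)) * Real.exp ((-t₀) ^ 2 * v / 8) := by
          gcongr
          exact hmgf_sum (-t₀)
      _ = B := by
          rw [show -(-t₀) * (-ε) = -t₀ * ε by ring, show (-t₀) ^ 2 = t₀ ^ 2 by ring]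
          exact hexp_eq
  have hPA : P {ω | ε ≤ (∑ k, κ k) ω} ≤ ENNReal.ofReal B := by
    rw [← ENNReal.ofReal_toReal (measure_ne_top P _)]
    exact ENNReal.ofReal_le_ofReal hupper
  have hPB : P {ω | (∑ k, κ k) ω ≤ -ε} ≤ ENNReal.ofReal B := by
    rw [← ENNReal.ofReal_toReal (measure_ne_top P _)]
    exact ENNReal.ofReal_le_ofReal hlower
  have hset : {ω | ε ≤ |(1 / (m₀ : ℝ)) * ∑ i, (if f (x i ω) = true then (1 : ℝ) else 0)
            - (1 / (m₁ : ℝ)) * ∑ j, (if f (x' j ω) = true then (1 : ℝ) else 0)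
            - (p₀ - p₁)|}
      ⊆ {ω | ε ≤ (∑ k, κ k) ω} ∪ {ω | (∑ k, κ k) ω ≤ -ε} := by
    intro ω hω
    simp only [Set.mem_setOf_eq] at hω
    rw [← hW ω] at hω
    rcases le_abs.mp hω with h | h
    · exact Or.inl h
    · exact Or.inr (le_neg.mp h)
  calc P _ ≤ P ({ω | ε ≤ (∑ k, κ k) ω} ∪ {ω | (∑ k, κ k) ω ≤ -ε}) := measure_mono hset
    _ ≤ P {ω | ε ≤ (∑ k, κ k) ω} + P {ω | (∑ k, κ k) ω ≤ -ε} := measure_union_le _ _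
    _ ≤ ENNReal.ofReal B + ENNReal.ofReal B := add_le_add hPA hPB
    _ = ENNReal.ofReal (2 * B) := by rw [← ENNReal.ofReal_add hB hB, two_mul]


/-- Uniform convergence of empirical statistical parity over a finite class `F`
of classifiers, together with the resulting sample-complexity bound: every
finite strategic class is weakly auditable for statistical parity. -/
theorem sp_uniform_convergence_finite_class
    {X : Type*} [MeasurableSpace X]
    (ν₀ ν₁ : Measure X) [IsProbabilityMeasure ν₀] [IsProbabilityMeasure ν₁]
    (F : Finset (X → Bool)) (hFne : F.Nonempty)
    (hFmeas : ∀ f ∈ F, Measurable f)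
    {Ω : Type*} [MeasurableSpace Ω] (P : Measure Ω) [IsProbabilityMeasure P]
    (m₀ m₁ : ℕ) (hm₀ : 1 ≤ m₀) (hm₁ : 1 ≤ m₁)
    (x : Fin m₀ → Ω → X) (x' : Fin m₁ → Ω → X)
    (hxmeas : ∀ i, Measurable (x i)) (hx'meas : ∀ j, Measurable (x' j))
    (hxlaw : ∀ i, Measure.map (x i) P = ν₀)
    (hx'law : ∀ j, Measure.map (x' j) P = ν₁)
    (hindep : iIndepFun (Sum.elim x x') P)
    (ε : ℝ) (hε : 0 < ε) :
    P {ω | ∃ f ∈ F,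
        |(|(1 / (m₀ : ℝ)) * ∑ i, (if f (x i ω) = true then (1 : ℝ) else 0)
            - (1 / (m₁ : ℝ)) * ∑ j, (if f (x' j ω) = true then (1 : ℝ) else 0)|)
          - (|(ν₀ {z | f z = true}).toReal - (ν₁ {z | f z = true}).toReal|)| ≥ ε}
      ≤ ENNReal.ofReal (2 * F.card * Real.exp (-(2 * m₀ * m₁ * ε ^ 2) / (m₀ + m₁)))
    ∧
    ∀ δ : ℝ, δ ∈ Set.Ioo (0 : ℝ) 1 →
      (1 / ε ^ 2) * Real.log (2 * F.card / δ) ≤ (min m₀ m₁ : ℕ) →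
      P {ω | ∃ f ∈ F,
          |(|(1 / (m₀ : ℝ)) * ∑ i, (if f (x i ω) = true then (1 : ℝ) else 0)
              - (1 / (m₁ : ℝ)) * ∑ j, (if f (x' j ω) = true then (1 : ℝ) else 0)|)
            - (|(ν₀ {z | f z = true}).toReal - (ν₁ {z | f z = true}).toReal|)| ≥ ε}
        ≤ ENNReal.ofReal δ := by
  classical
  set B : ℝ := Real.exp (-(2 * m₀ * m₁ * ε ^ 2) / ((m₀ : ℝ) + m₁)) with hBdef
  have hB : 0 < B := Real.exp_pos _
  set E : (X → Bool) → Set Ω := fun f => {ω |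
        |(|(1 / (m₀ : ℝ)) * ∑ i, (if f (x i ω) = true then (1 : ℝ) else 0)
            - (1 / (m₁ : ℝ)) * ∑ j, (if f (x' j ω) = true then (1 : ℝ) else 0)|)
          - (|(ν₀ {z | f z = true}).toReal - (ν₁ {z | f z = true}).toReal|)| ≥ ε}
    with hEdef
  have hE : ∀ f ∈ F, P (E f) ≤ ENNReal.ofReal (2 * B) := by
    intro f hfF
    refine le_trans (measure_mono ?_)
      (two_sample_hoeffding ν₀ ν₁ P m₀ m₁ hm₀ hm₁ x x' hxmeas hx'meas hxlaw hx'law hindep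
        (hFmeas f hfF) ε hε)
    intro ω hω
    simp only [hEdef, Set.mem_setOf_eq] at hω ⊢
    calc ε ≤ _ := hω
      _ ≤ |(1 / (m₀ : ℝ)) * ∑ i, (if f (x i ω) = true then (1 : ℝ) else 0)
            - (1 / (m₁ : ℝ)) * ∑ j, (if f (x' j ω) = true then (1 : ℝ) else 0)
            - ((ν₀ {z | f z = true}).toReal - (ν₁ {z | f z = true}).toReal)| :=
        abs_abs_sub_abs_le_abs_sub _ _
  have hcard : P {ω | ∃ f ∈ F, ω ∈ E f} ≤ ENNReal.ofReal (2 * F.card * B) := by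
    have hsub : {ω | ∃ f ∈ F, ω ∈ E f} ⊆ ⋃ f ∈ F, E f := by
      rintro ω ⟨f, hf, h⟩
      exact Set.mem_biUnion hf h
    calc P {ω | ∃ f ∈ F, ω ∈ E f} ≤ P (⋃ f ∈ F, E f) := measure_mono hsub
      _ ≤ ∑ f ∈ F, P (E f) := measure_biUnion_finset_le F E
      _ ≤ ∑ _f ∈ F, ENNReal.ofReal (2 * B) := Finset.sum_le_sum (fun f hf => hE f hf)
      _ = F.card • ENNReal.ofReal (2 * B) := Finset.sum_const _
      _ = ENNReal.ofReal (2 * F.card * B) := by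
          rw [nsmul_eq_mul, ← ENNReal.ofReal_natCast F.card,
            ← ENNReal.ofReal_mul (by positivity : (0:ℝ) ≤ (F.card : ℝ))]
          congr 1
          ring
  constructor
  · exact hcard
  · intro δ hδ hmin
    obtain ⟨hδ0, hδ1⟩ := hδ
    refine le_trans hcard (ENNReal.ofReal_le_ofReal ?_)
    have hm₀' : (0:ℝ) < m₀ := by exact_mod_cast hm₀
    have hm₁' : (0:ℝ) < m₁ := by exact_mod_cast hm₁
    have hcard1 : (1:ℝ) ≤ (F.card : ℝ) := by exact_mod_cast Finset.card_pos.mpr hFne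
    have hC : (0:ℝ) < 2 * F.card / δ := by positivity
    have hε2 : (0:ℝ) < ε ^ 2 := by positivity
    have hmin' : Real.log (2 * F.card / δ) ≤ ε ^ 2 * ((min m₀ m₁ : ℕ) : ℝ) := by
      have h := mul_le_mul_of_nonneg_left hmin hε2.le
      calc Real.log (2 * F.card / δ)
          = ε ^ 2 * ((1 / ε ^ 2) * Real.log (2 * F.card / δ)) := by
            field_simp
        _ ≤ ε ^ 2 * ((min m₀ m₁ : ℕ) : ℝ) := h
    have hkey : ε ^ 2 * ((min m₀ m₁ : ℕ) : ℝ) ≤ 2 * m₀ * m₁ * ε ^ 2 / ((m₀:ℝ) + m₁) := by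
      have hmincast : ((min m₀ m₁ : ℕ) : ℝ) = min (m₀:ℝ) (m₁:ℝ) := by
        push_cast
        rfl
      rw [hmincast, le_div_iff₀ (by positivity : (0:ℝ) < (m₀:ℝ) + m₁)]
      rcases le_total (m₀:ℝ) (m₁:ℝ) with h | h
      · rw [min_eq_left h]
        nlinarith [mul_nonneg (mul_nonneg hε2.le hm₀'.le) (sub_nonneg.mpr h)]
      · rw [min_eq_right h]
        nlinarith [mul_nonneg (mul_nonneg hε2.le hm₁'.le) (sub_nonneg.mpr h)]
    have hBle : B ≤ δ / (2 * F.card) := by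
      rw [hBdef]
      calc Real.exp (-(2 * m₀ * m₁ * ε ^ 2) / ((m₀ : ℝ) + m₁))
          ≤ Real.exp (-Real.log (2 * F.card / δ)) := by
            apply Real.exp_le_exp.mpr
            rw [neg_div]
            apply neg_le_neg
            exact le_trans hmin' hkey
        _ = δ / (2 * F.card) := by
            rw [Real.exp_neg, Real.exp_log hC, inv_div]
    calc 2 * (F.card : ℝ) * B ≤ 2 * F.card * (δ / (2 * F.card)) := by
          apply mul_le_mul_of_nonneg_left hBle (by positivity)
      _ = δ := by
          field_simp
end

section
/- Let X be a measurable space, D a probability measure on X, Y a countable set, h* : X → Y a measurable function, and H a finite set of measurable functions X → Y. Let x₁, …, x_m be i.i.d. samples from D. Then for every ε ∈ (0,1), the probability that there exists h ∈ H with D({x : h(x) ≠ h*(x)}) > ε and h(xᵢ) = h*(xᵢ) for every i ∈ {1, …, m} is at most |H|·(1 − ε)^m ≤ |H|·e^{−ε m}. -/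
open MeasureTheory ProbabilityTheory Real

/-- Correctness half of strong auditability for finite classes (realizable PAC
bound): the probability that some hypothesis in the finite class `H` has true
error greater than `ε` yet agrees with the target `h*` on every one of `m`
i.i.d. samples is at most `|H|·(1−ε)^m ≤ |H|·e^(−εm)`. -/
theorem finite_class_correctness
    {X : Type*} [MeasurableSpace X] (D : Measure X) [IsProbabilityMeasure D]
    {Y : Type*} [MeasurableSpace Y] [Countable Y] [MeasurableSingletonClass Y]
    (hstar : X → Y) (hstarMeas : Measurable hstar)
    (H : Finset (X → Y)) (hHmeas : ∀ h ∈ H, Measurable h)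
    {Ω : Type*} [MeasurableSpace Ω] (P : Measure Ω) [IsProbabilityMeasure P]
    (m : ℕ) (x : Fin m → Ω → X)
    (hxmeas : ∀ i, Measurable (x i))
    (hxlaw : ∀ i, Measure.map (x i) P = D)
    (hindep : iIndepFun x P)
    (ε : ℝ) (hε : ε ∈ Set.Ioo (0 : ℝ) 1) :
    P {ω | ∃ h ∈ H, D {z | h z ≠ hstar z} > ENNReal.ofReal ε ∧
        ∀ i, h (x i ω) = hstar (x i ω)}
      ≤ ENNReal.ofReal ((H.card : ℝ) * (1 - ε) ^ m)
    ∧ (H.card : ℝ) * (1 - ε) ^ m ≤ (H.card : ℝ) * Real.exp (-(ε * m)) := by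
  obtain ⟨hε0, hε1⟩ := hε
  constructor
  · -- union bound
    have hsub : {ω | ∃ h ∈ H, D {z | h z ≠ hstar z} > ENNReal.ofReal ε ∧
        ∀ i, h (x i ω) = hstar (x i ω)} ⊆
        ⋃ h ∈ H, {ω | D {z | h z ≠ hstar z} > ENNReal.ofReal ε ∧
          ∀ i, h (x i ω) = hstar (x i ω)} := by
      intro ω ⟨h, hh, hc⟩
      exact Set.mem_biUnion hh hc
    calc P _ ≤ ∑ h ∈ H, P {ω | D {z | h z ≠ hstar z} > ENNReal.ofReal ε ∧
          ∀ i, h (x i ω) = hstar (x i ω)} :=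
        (measure_mono hsub).trans (measure_biUnion_finset_le H _)
      _ ≤ ∑ _h ∈ H, ENNReal.ofReal ((1 - ε) ^ m) := by
        refine Finset.sum_le_sum fun h hh => ?_
        by_cases herr : D {z | h z ≠ hstar z} > ENNReal.ofReal ε
        · -- main bound for a bad hypothesis
          have hAmeas : MeasurableSet {z | h z = hstar z} :=
            measurableSet_eq_fun (hHmeas h hh) hstarMeas
          have hDA : D {z | h z = hstar z} ≤ ENNReal.ofReal (1 - ε) := by
            have hc : {z | h z = hstar z}ᶜ = {z | h z ≠ hstar z} := by
              ext z; simp [Set.mem_compl_iff]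
            have hsum : D {z | h z = hstar z} + D {z | h z ≠ hstar z} = 1 := by
              rw [← hc, measure_add_measure_compl hAmeas, measure_univ]
            have hadd : D {z | h z = hstar z} + ENNReal.ofReal ε ≤ 1 := by
              calc D {z | h z = hstar z} + ENNReal.ofReal ε
                  ≤ D {z | h z = hstar z} + D {z | h z ≠ hstar z} :=
                    add_le_add_right herr.le _
                _ = 1 := hsum
            have : D {z | h z = hstar z} ≤ 1 - ENNReal.ofReal ε :=
              ENNReal.le_sub_of_add_le_right ENNReal.ofReal_ne_top hadd
            calc D {z | h z = hstar z} ≤ 1 - ENNReal.ofReal ε := this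
              _ = ENNReal.ofReal (1 - ε) := by
                rw [← ENNReal.ofReal_one, ← ENNReal.ofReal_sub _ hε0.le]
          have hset : {ω | D {z | h z ≠ hstar z} > ENNReal.ofReal ε ∧
              ∀ i, h (x i ω) = hstar (x i ω)} ⊆ ⋂ i, (x i) ⁻¹' {z | h z = hstar z} := by
            intro ω hω
            simp only [Set.mem_iInter, Set.mem_preimage]
            exact hω.2
          have hprod : P (⋂ i, (x i) ⁻¹' {z | h z = hstar z})
              = ∏ i : Fin m, P ((x i) ⁻¹' {z | h z = hstar z}) := by
            refine hindep.meas_iInter fun i => ?_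
            exact ⟨{z | h z = hstar z}, hAmeas, rfl⟩
          have hlaw : ∀ i, P ((x i) ⁻¹' {z | h z = hstar z}) = D {z | h z = hstar z} := by
            intro i
            rw [← hxlaw i, Measure.map_apply (hxmeas i) hAmeas]
          calc P {ω | D {z | h z ≠ hstar z} > ENNReal.ofReal ε ∧
                ∀ i, h (x i ω) = hstar (x i ω)}
              ≤ P (⋂ i, (x i) ⁻¹' {z | h z = hstar z}) := measure_mono hset
            _ = ∏ i : Fin m, P ((x i) ⁻¹' {z | h z = hstar z}) := hprod
            _ ≤ ∏ _i : Fin m, ENNReal.ofReal (1 - ε) := by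
                refine Finset.prod_le_prod' fun i _ => ?_
                rw [hlaw i]; exact hDA
            _ = ENNReal.ofReal ((1 - ε) ^ m) := by
                rw [Finset.prod_const, Finset.card_univ, Fintype.card_fin,
                  ENNReal.ofReal_pow (by linarith)]
        · have : {ω | D {z | h z ≠ hstar z} > ENNReal.ofReal ε ∧
              ∀ i, h (x i ω) = hstar (x i ω)} = ∅ := by
            ext ω; simp only [Set.mem_setOf_eq, Set.mem_empty_iff_false, iff_false]
            exact fun hc => herr hc.1
          rw [this, measure_empty]
          exact zero_le
      _ = ENNReal.ofReal ((H.card : ℝ) * (1 - ε) ^ m) := by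
        rw [Finset.sum_const, nsmul_eq_mul, ENNReal.ofReal_mul (by positivity),
          ENNReal.ofReal_natCast]
  · have h1 : (1 - ε) ^ m ≤ Real.exp (-(ε * m)) := by
      have hbase : 1 - ε ≤ Real.exp (-ε) := by
        have := Real.add_one_le_exp (-ε); linarith
      calc (1 - ε) ^ m ≤ (Real.exp (-ε)) ^ m :=
          pow_le_pow_left₀ (by linarith) hbase m
        _ = Real.exp (-(ε * m)) := by
          rw [← Real.exp_nat_mul]; congr 1; ring
    exact mul_le_mul_of_nonneg_left h1 (Nat.cast_nonneg _)
end
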